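/- arXiv:1808.03440 — 3 statements merged into one kernel-verified Lean document; each statement's English description precedes it below -/
import Mathlib

section
/- For every λ > 0 and every integer ℓ ≥ 1, if μ, μ' : [0,1]² → [0,1] are measurable, x₁, x₂ are independent uniform random variables on [0,1], then E[(∫₀¹ μ(s,x₁)μ(s,x₂) ds)^ℓ] + E[(∫₀¹ μ'(s,x₁)μ'(s,x₂) ds)^ℓ] - 2·E[(∫₀¹ μ(s,x₁)μ'(s,x₂) ds)^ℓ] ≥ 0. -/
open MeasureTheory Function
open scoped unitInterval

section Helpers

private lemma norm_int_le_one {α : Type*} [MeasurableSpace α] (ν : Measure α)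
    [IsProbabilityMeasure ν] {h : α → ℝ} (hb : ∀ y, ‖h y‖ ≤ 1) :
    ‖∫ y, h y ∂ν‖ ≤ 1 := by
  calc ‖∫ y, h y ∂ν‖ ≤ 1 * (ν Set.univ).toReal :=
        norm_integral_le_of_norm_le_const (Filter.Eventually.of_forall hb)
    _ = 1 := by simp

private lemma integrable_of_bdd {α : Type*} [MeasurableSpace α] (ν : Measure α)
    [IsFiniteMeasure ν] {h : α → ℝ} (hm : AEStronglyMeasurable h ν)
    (hb : ∀ y, ‖h y‖ ≤ 1) : Integrable h ν :=
  (integrable_const 1).mono' hm (Filter.Eventually.of_forall hb)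

variable {X : Type*} [MeasureSpace X] [IsProbabilityMeasure (volume : Measure X)]

private lemma prodK_meas {ℓ : ℕ} {f : X → X → ℝ} (hf : Measurable (uncurry f)) :
    Measurable (fun q : (Fin ℓ → X) × X => ∏ i, f (q.1 i) q.2) := by
  refine Finset.measurable_prod _ fun i _ => ?_
  have h : Measurable (fun q : (Fin ℓ → X) × X => (q.1 i, q.2)) :=
    ((measurable_pi_apply i).comp measurable_fst).prodMk measurable_snd
  exact hf.comp h

private lemma prodK_bounds {ℓ : ℕ} {f : X → X → ℝ}
    (hf0 : ∀ s x, 0 ≤ f s x) (hf1 : ∀ s x, f s x ≤ 1) (t : Fin ℓ → X) (x : X) :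
    (∏ i, f (t i) x) ∈ Set.Icc (0:ℝ) 1 :=
  ⟨Finset.prod_nonneg fun i _ => hf0 _ _,
   Finset.prod_le_one (fun i _ => hf0 _ _) (fun i _ => hf1 _ _)⟩

private lemma F_meas {ℓ : ℕ} {f : X → X → ℝ} (hf : Measurable (uncurry f)) :
    Measurable (fun t : Fin ℓ → X => ∫ x, ∏ i, f (t i) x) :=
  (StronglyMeasurable.integral_prod_right'
    (prodK_meas hf).stronglyMeasurable).measurable

private lemma F_bounds {ℓ : ℕ} {f : X → X → ℝ}
    (hf : Measurable (uncurry f)) (hf0 : ∀ s x, 0 ≤ f s x) (hf1 : ∀ s x, f s x ≤ 1)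
    (t : Fin ℓ → X) : (∫ x, ∏ i, f (t i) x) ∈ Set.Icc (0:ℝ) 1 := by
  constructor
  · exact integral_nonneg fun x => (prodK_bounds hf0 hf1 t x).1
  · have hint : Integrable (fun x => ∏ i, f (t i) x) (volume : Measure X) := by
      refine integrable_of_bdd _ ?_ ?_
      · exact ((prodK_meas hf).comp measurable_prodMk_left).aestronglyMeasurable
      · intro x
        rw [Real.norm_eq_abs, abs_le]
        exact ⟨by linarith [(prodK_bounds hf0 hf1 t x).1], (prodK_bounds hf0 hf1 t x).2⟩
    calc (∫ x, ∏ i, f (t i) x) ≤ ∫ _x : X, (1:ℝ) :=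
          integral_mono hint (integrable_const 1) fun x => (prodK_bounds hf0 hf1 t x).2
      _ = 1 := by simp

private lemma pos_key (ℓ : ℕ) (f g : X → X → ℝ)
    (hf : Measurable (uncurry f)) (hg : Measurable (uncurry g))
    (hf0 : ∀ s x, 0 ≤ f s x) (hf1 : ∀ s x, f s x ≤ 1)
    (hg0 : ∀ s x, 0 ≤ g s x) (hg1 : ∀ s x, g s x ≤ 1) :
    (∫ x₁, ∫ x₂, (∫ s, f s x₁ * g s x₂) ^ ℓ)
      = ∫ t : Fin ℓ → X, (∫ x, ∏ i, f (t i) x) * (∫ x, ∏ i, g (t i) x) := by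
  have h0 : ∀ x₁ x₂ : X, (∫ s, f s x₁ * g s x₂) ^ ℓ
      = ∫ t : Fin ℓ → X, (∏ i, f (t i) x₁) * ∏ i, g (t i) x₂ := by
    intro x₁ x₂
    have := (integral_fintype_prod_volume_eq_pow (ι := Fin ℓ) (fun s => f s x₁ * g s x₂)).symm
    rw [Fintype.card_fin] at this
    rw [this]
    congr 1 with t
    exact Finset.prod_mul_distrib
  simp_rw [h0]
  -- the kernel on (X × X) × (Fin ℓ → X)
  set K : (X × X) → (Fin ℓ → X) → ℝ :=
    fun p t => (∏ i, f (t i) p.1) * ∏ i, g (t i) p.2 with hK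
  have hKmeas : Measurable (uncurry K) := by
    apply Measurable.mul
    · exact (prodK_meas hf).comp
        ((measurable_snd.prodMk (measurable_fst.comp measurable_fst)))
    · exact (prodK_meas hg).comp
        ((measurable_snd.prodMk (measurable_snd.comp measurable_fst)))
  have hKbd : ∀ q : (X × X) × (Fin ℓ → X), ‖uncurry K q‖ ≤ 1 := by
    rintro ⟨⟨x₁, x₂⟩, t⟩
    rw [Real.norm_eq_abs, abs_le]
    constructor
    · have := mul_nonneg (prodK_bounds hf0 hf1 t x₁).1 (prodK_bounds hg0 hg1 t x₂).1
      simpa [uncurry, hK] using by linarith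
    · have := mul_le_one₀ (prodK_bounds hf0 hf1 t x₁).2
        (prodK_bounds hg0 hg1 t x₂).1 (prodK_bounds hg0 hg1 t x₂).2
      simpa [uncurry, hK] using this
  have hKint : Integrable (uncurry K)
      (((volume : Measure X).prod volume).prod (volume : Measure (Fin ℓ → X))) :=
    integrable_of_bdd _ hKmeas.aestronglyMeasurable hKbd
  have hΦmeas : Measurable (fun p : X × X => ∫ t : Fin ℓ → X, K p t) :=
    (StronglyMeasurable.integral_prod_right' hKmeas.stronglyMeasurable).measurable
  have hΦint : Integrable (uncurry (fun x₁ x₂ => ∫ t : Fin ℓ → X, K (x₁, x₂) t))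
      ((volume : Measure X).prod volume) := by
    refine integrable_of_bdd _ ?_ ?_
    · exact hΦmeas.aestronglyMeasurable
    · intro p
      exact norm_int_le_one _ (fun t => hKbd (p, t))
  calc (∫ x₁, ∫ x₂, ∫ t : Fin ℓ → X, (∏ i, f (t i) x₁) * ∏ i, g (t i) x₂)
      = ∫ p : X × X, (∫ t : Fin ℓ → X, K p t) ∂((volume : Measure X).prod volume) :=
        integral_integral hΦint
    _ = ∫ t : Fin ℓ → X, ∫ p : X × X, K p t ∂((volume : Measure X).prod volume) :=
        integral_integral_swap hKint
    _ = ∫ t : Fin ℓ → X, (∫ x, ∏ i, f (t i) x) * (∫ x, ∏ i, g (t i) x) := by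
        congr 1 with t
        exact integral_prod_mul (fun x => ∏ i, f (t i) x) (fun x => ∏ i, g (t i) x)

end Helpers

/-- condition POS for the hard-core model: for every `λ > 0`, every integer
`ℓ ≥ 1` and all measurable `μ, μ' : [0,1]² → [0,1]`, with `x₁, x₂` independent uniform on
`[0,1]`,
`E[(∫₀¹ μ(s,x₁)μ(s,x₂) ds)^ℓ] + E[(∫₀¹ μ'(s,x₁)μ'(s,x₂) ds)^ℓ]
  - 2·E[(∫₀¹ μ(s,x₁)μ'(s,x₂) ds)^ℓ] ≥ 0`. -/
theorem hardcore_POS (lam : ℝ) (hlam : 0 < lam) (ℓ : ℕ) (hℓ : 1 ≤ ℓ)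
    (μ μ' : ℝ → ℝ → ℝ)
    (hμ : Measurable (Function.uncurry μ)) (hμ' : Measurable (Function.uncurry μ'))
    (hμb : ∀ s ∈ Set.Icc (0:ℝ) 1, ∀ x ∈ Set.Icc (0:ℝ) 1, μ s x ∈ Set.Icc (0:ℝ) 1)
    (hμ'b : ∀ s ∈ Set.Icc (0:ℝ) 1, ∀ x ∈ Set.Icc (0:ℝ) 1, μ' s x ∈ Set.Icc (0:ℝ) 1) :
    0 ≤ (∫ x₁ in Set.Icc (0:ℝ) 1, ∫ x₂ in Set.Icc (0:ℝ) 1,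
            (∫ s in Set.Icc (0:ℝ) 1, μ s x₁ * μ s x₂) ^ ℓ)
        + (∫ x₁ in Set.Icc (0:ℝ) 1, ∫ x₂ in Set.Icc (0:ℝ) 1,
            (∫ s in Set.Icc (0:ℝ) 1, μ' s x₁ * μ' s x₂) ^ ℓ)
        - 2 * ∫ x₁ in Set.Icc (0:ℝ) 1, ∫ x₂ in Set.Icc (0:ℝ) 1,
            (∫ s in Set.Icc (0:ℝ) 1, μ s x₁ * μ' s x₂) ^ ℓ := by
  -- restrict to the unit interval as a probability space
  set f : I → I → ℝ := fun s x => μ ↑s ↑x with hfdef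
  set g : I → I → ℝ := fun s x => μ' ↑s ↑x with hgdef
  have hcoe : Measurable (fun p : I × I => ((↑p.1 : ℝ), (↑p.2 : ℝ))) :=
    (measurable_subtype_coe.comp measurable_fst).prodMk
      (measurable_subtype_coe.comp measurable_snd)
  have hf : Measurable (uncurry f) := hμ.comp hcoe
  have hg : Measurable (uncurry g) := hμ'.comp hcoe
  have hf0 : ∀ s x : I, 0 ≤ f s x := fun s x => (hμb ↑s s.2 ↑x x.2).1
  have hf1 : ∀ s x : I, f s x ≤ 1 := fun s x => (hμb ↑s s.2 ↑x x.2).2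
  have hg0 : ∀ s x : I, 0 ≤ g s x := fun s x => (hμ'b ↑s s.2 ↑x x.2).1
  have hg1 : ∀ s x : I, g s x ≤ 1 := fun s x => (hμ'b ↑s s.2 ↑x x.2).2
  have conv : ∀ (A : ℝ → ℝ), (∫ x in Set.Icc (0:ℝ) 1, A x) = ∫ x : I, A ↑x :=
    fun A => (integral_subtype_comap measurableSet_Icc A).symm
  have key : ∀ (a b : ℝ → ℝ → ℝ), Measurable (uncurry fun (s x : I) => a ↑s ↑x) →
      Measurable (uncurry fun (s x : I) => b ↑s ↑x) →
      (∀ s x : I, 0 ≤ a ↑s ↑x) → (∀ s x : I, a ↑s ↑x ≤ 1) →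
      (∀ s x : I, 0 ≤ b ↑s ↑x) → (∀ s x : I, b ↑s ↑x ≤ 1) →
      (∫ x₁ in Set.Icc (0:ℝ) 1, ∫ x₂ in Set.Icc (0:ℝ) 1,
          (∫ s in Set.Icc (0:ℝ) 1, a s x₁ * b s x₂) ^ ℓ)
        = ∫ t : Fin ℓ → I,
            (∫ x : I, ∏ i, a ↑(t i) ↑x) * (∫ x : I, ∏ i, b ↑(t i) ↑x) := by
    intro a b ha hb ha0 ha1 hb0 hb1
    rw [conv]
    have h1 : ∀ x₁ : I, (∫ x₂ in Set.Icc (0:ℝ) 1,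
        (∫ s in Set.Icc (0:ℝ) 1, a s ↑x₁ * b s x₂) ^ ℓ)
        = ∫ x₂ : I, (∫ s : I, a ↑s ↑x₁ * b ↑s ↑x₂) ^ ℓ := by
      intro x₁
      rw [conv]
      congr 1 with x₂
      rw [conv]
    simp_rw [h1]
    exact pos_key (X := I) ℓ (fun s x => a ↑s ↑x) (fun s x => b ↑s ↑x) ha hb ha0 ha1 hb0 hb1
  rw [key μ μ hf hf hf0 hf1 hf0 hf1, key μ' μ' hg hg hg0 hg1 hg0 hg1,
    key μ μ' hf hg hf0 hf1 hg0 hg1]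
  set F : (Fin ℓ → I) → ℝ := fun t => ∫ x : I, ∏ i, μ ↑(t i) ↑x with hF
  set G : (Fin ℓ → I) → ℝ := fun t => ∫ x : I, ∏ i, μ' ↑(t i) ↑x with hG
  have hFmeas : Measurable F := F_meas hf
  have hGmeas : Measurable G := F_meas hg
  have hFb : ∀ t, F t ∈ Set.Icc (0:ℝ) 1 := F_bounds hf hf0 hf1
  have hGb : ∀ t, G t ∈ Set.Icc (0:ℝ) 1 := F_bounds hg hg0 hg1
  have hbd : ∀ (P Q : (Fin ℓ → I) → ℝ), (∀ t, P t ∈ Set.Icc (0:ℝ) 1) →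
      (∀ t, Q t ∈ Set.Icc (0:ℝ) 1) → Measurable P → Measurable Q →
      Integrable (fun t => P t * Q t) (volume : Measure (Fin ℓ → I)) := by
    intro P Q hP hQ hPm hQm
    refine integrable_of_bdd _ (hPm.mul hQm).aestronglyMeasurable fun t => ?_
    rw [Real.norm_eq_abs, abs_le]
    refine ⟨by nlinarith [(hP t).1, (hQ t).1], ?_⟩
    exact mul_le_one₀ (hP t).2 (hQ t).1 (hQ t).2
  have hFF := hbd F F hFb hFb hFmeas hFmeas
  have hGG := hbd G G hGb hGb hGmeas hGmeas
  have hFG := hbd F G hFb hGb hFmeas hGmeas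
  have hsq : (0:ℝ) ≤ ∫ t : Fin ℓ → I, (F t - G t) ^ 2 :=
    integral_nonneg fun t => sq_nonneg _
  have hexpand : (∫ t : Fin ℓ → I, (F t - G t) ^ 2)
      = (∫ t : Fin ℓ → I, F t * F t) + (∫ t : Fin ℓ → I, G t * G t)
        - 2 * ∫ t : Fin ℓ → I, F t * G t := by
    have : (fun t : Fin ℓ → I => (F t - G t) ^ 2)
        = fun t => (F t * F t + G t * G t) - 2 * (F t * G t) := by
      funext t; ring
    have h1 : Integrable (fun t => F t * F t + G t * G t)
        (volume : Measure (Fin ℓ → I)) := hFF.add hGG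
    have h2 : Integrable (fun t => 2 * (F t * G t))
        (volume : Measure (Fin ℓ → I)) := hFG.const_mul 2
    rw [this, integral_sub h1 h2, integral_add hFF hGG, integral_const_mul]
  linarith [hsq, hexpand]
end

section
/- For any two probability measures μ, ν on Ω^V (with Ω, V finite nonempty) we have ∑_{v∈V} dTV(μ_v, ν_v) ≤ 2·|Ω|·n·cutm(μ, ν), where n = |V|, μ_v, ν_v denote the marginals at coordinate v, and cutm is the discrete cut metric. -/
open scoped BigOperators

variable {Ω V : Type*}

/-- A probability mass function on the configuration space `Ω^V`. -/
def IsPMF [Fintype Ω] [Fintype V] [DecidableEq V] (μ : (V → Ω) → ℝ) : Prop :=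
  (∀ σ, 0 ≤ μ σ) ∧ ∑ σ : V → Ω, μ σ = 1

/-- The marginal of `μ` at coordinate `v`. -/
def marg [Fintype Ω] [Fintype V] [DecidableEq V] [DecidableEq Ω]
    (μ : (V → Ω) → ℝ) (v : V) (ω : Ω) : ℝ :=
  ∑ σ : V → Ω, if σ v = ω then μ σ else 0

/-- Total variation distance between two (signed) mass functions on `Ω`. -/
noncomputable def tvDist [Fintype Ω] (p q : Ω → ℝ) : ℝ :=
  (1 / 2) * ∑ ω : Ω, |p ω - q ω|

/-- `γ` is a coupling of `μ` and `ν`. -/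
def IsCoupling [Fintype Ω] [Fintype V] [DecidableEq V]
    (μ ν : (V → Ω) → ℝ) (γ : ((V → Ω) × (V → Ω)) → ℝ) : Prop :=
  (∀ p, 0 ≤ γ p) ∧ (∀ σ, ∑ τ : V → Ω, γ (σ, τ) = μ σ) ∧
    (∀ τ, ∑ σ : V → Ω, γ (σ, τ) = ν τ)

/-- The discrepancy of a coupling `γ` at `(I, B, ω)`. -/
noncomputable def cutDisc [Fintype Ω] [Fintype V] [DecidableEq V] [DecidableEq Ω]
    (γ : ((V → Ω) × (V → Ω)) → ℝ) (I : Finset V)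
    (B : Finset ((V → Ω) × (V → Ω))) (ω : Ω) : ℝ :=
  |∑ i ∈ I, ∑ p ∈ B,
      γ p * ((if p.1 i = ω then (1 : ℝ) else 0) - (if p.2 i = ω then (1 : ℝ) else 0))|

/-- The discrete cut metric: `(1/n)` times the infimum over couplings of the maximal
discrepancy over all `I ⊆ V`, `B ⊆ Ω^V × Ω^V`, `ω ∈ Ω`. -/
noncomputable def cutm [Fintype Ω] [Fintype V] [DecidableEq V] [DecidableEq Ω]
    (μ ν : (V → Ω) → ℝ) : ℝ :=
  (Fintype.card V : ℝ)⁻¹ *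
    sInf {D : ℝ | ∃ γ, IsCoupling μ ν γ ∧
      D = ⨆ x : Finset V × Finset ((V → Ω) × (V → Ω)) × Ω, cutDisc γ x.1 x.2.1 x.2.2}

lemma marg_diff_eq [Fintype Ω] [Fintype V] [DecidableEq V] [DecidableEq Ω]
    {μ ν : (V → Ω) → ℝ} {γ : ((V → Ω) × (V → Ω)) → ℝ}
    (hγ : IsCoupling μ ν γ) (v : V) (ω : Ω) :
    marg μ v ω - marg ν v ω =
      ∑ p : (V → Ω) × (V → Ω),
        γ p * ((if p.1 v = ω then (1 : ℝ) else 0) - (if p.2 v = ω then (1 : ℝ) else 0)) := by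
  have h1 : ∑ p : (V → Ω) × (V → Ω), γ p * (if p.1 v = ω then (1 : ℝ) else 0)
      = marg μ v ω := by
    rw [Fintype.sum_prod_type, marg]
    refine Finset.sum_congr rfl fun σ _ => ?_
    rw [← hγ.2.1 σ]
    by_cases h : σ v = ω <;> simp [h]
  have h2 : ∑ p : (V → Ω) × (V → Ω), γ p * (if p.2 v = ω then (1 : ℝ) else 0)
      = marg ν v ω := by
    rw [Fintype.sum_prod_type_right, marg]
    refine Finset.sum_congr rfl fun τ _ => ?_
    rw [← hγ.2.2 τ]
    by_cases h : τ v = ω <;> simp [h]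
  simp only [mul_sub]
  rw [Finset.sum_sub_distrib, h1, h2]

lemma sum_tv_le [Fintype Ω] [Fintype V] [DecidableEq V] [DecidableEq Ω]
    [Nonempty Ω] [Nonempty V] {μ ν : (V → Ω) → ℝ} {γ : ((V → Ω) × (V → Ω)) → ℝ}
    (hγ : IsCoupling μ ν γ) :
    ∑ v : V, tvDist (marg μ v) (marg ν v) ≤ (Fintype.card Ω : ℝ) *
      ⨆ x : Finset V × Finset ((V → Ω) × (V → Ω)) × Ω, cutDisc γ x.1 x.2.1 x.2.2 := by
  set D := ⨆ x : Finset V × Finset ((V → Ω) × (V → Ω)) × Ω, cutDisc γ x.1 x.2.1 x.2.2 with hD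
  have hbdd : BddAbove (Set.range fun x : Finset V × Finset ((V → Ω) × (V → Ω)) × Ω =>
      cutDisc γ x.1 x.2.1 x.2.2) := Set.Finite.bddAbove (Set.finite_range _)
  have hle : ∀ (I : Finset V) (ω : Ω), cutDisc γ I Finset.univ ω ≤ D :=
    fun I ω => le_ciSup hbdd (I, Finset.univ, ω)
  have key : ∀ (I : Finset V) (ω : Ω),
      |∑ v ∈ I, (marg μ v ω - marg ν v ω)| ≤ D := by
    intro I ω
    have : ∑ v ∈ I, (marg μ v ω - marg ν v ω) =
        ∑ i ∈ I, ∑ p ∈ Finset.univ,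
          γ p * ((if p.1 i = ω then (1 : ℝ) else 0) - (if p.2 i = ω then (1 : ℝ) else 0)) :=
      Finset.sum_congr rfl fun v _ => marg_diff_eq hγ v ω
    rw [this]
    exact hle I ω
  have hω : ∀ ω : Ω, ∑ v : V, |marg μ v ω - marg ν v ω| ≤ 2 * D := by
    intro ω
    set a : V → ℝ := fun v => marg μ v ω - marg ν v ω with ha
    set Ip := Finset.univ.filter (fun v => 0 ≤ a v) with hIp
    set Im := Finset.univ.filter (fun v => ¬ 0 ≤ a v) with hIm
    have hsplit : ∑ v : V, |a v| = ∑ v ∈ Ip, a v - ∑ v ∈ Im, a v := by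
      rw [← Finset.sum_filter_add_sum_filter_not Finset.univ (fun v => 0 ≤ a v) (fun v => |a v|)]
      rw [sub_eq_add_neg, ← Finset.sum_neg_distrib]
      congr 1
      · exact Finset.sum_congr rfl fun v hv => abs_of_nonneg (Finset.mem_filter.mp hv).2
      · exact Finset.sum_congr rfl fun v hv =>
          abs_of_neg (lt_of_not_ge (Finset.mem_filter.mp hv).2)
    rw [hsplit]
    have h1 : ∑ v ∈ Ip, a v ≤ D := le_trans (le_abs_self _) (key Ip ω)
    have h2 : -∑ v ∈ Im, a v ≤ D := le_trans (neg_le_abs _) (key Im ω)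
    linarith
  have : ∑ v : V, tvDist (marg μ v) (marg ν v)
      = (1 / 2) * ∑ ω : Ω, ∑ v : V, |marg μ v ω - marg ν v ω| := by
    rw [Finset.sum_comm]
    simp [tvDist, Finset.mul_sum]
  rw [this]
  have hsum : ∑ ω : Ω, ∑ v : V, |marg μ v ω - marg ν v ω|
      ≤ ∑ _ω : Ω, 2 * D := Finset.sum_le_sum fun ω _ => hω ω
  rw [Finset.sum_const, Finset.card_univ, nsmul_eq_mul] at hsum
  nlinarith [hsum]

/-- for probability measures `μ, ν` on `Ω^V`,
`∑_{v∈V} dTV(μ_v, ν_v) ≤ 2·|Ω|·n·cutm(μ, ν)` where `n = |V|`. -/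
theorem marginals_close_in_cutm [Fintype Ω] [Fintype V] [DecidableEq V] [DecidableEq Ω]
    [Nonempty Ω] [Nonempty V] (μ ν : (V → Ω) → ℝ) (hμ : IsPMF μ) (hν : IsPMF ν) :
    ∑ v : V, tvDist (marg μ v) (marg ν v)
      ≤ 2 * (Fintype.card Ω : ℝ) * (Fintype.card V : ℝ) * cutm μ ν := by
  classical
  set S := {D : ℝ | ∃ γ, IsCoupling μ ν γ ∧
      D = ⨆ x : Finset V × Finset ((V → Ω) × (V → Ω)) × Ω, cutDisc γ x.1 x.2.1 x.2.2}
  have hSne : S.Nonempty := by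
    refine ⟨_, fun p => μ p.1 * ν p.2, ⟨fun p => mul_nonneg (hμ.1 _) (hν.1 _), ?_, ?_⟩, rfl⟩
    · intro σ; simp only [← Finset.mul_sum, hν.2, mul_one]
    · intro τ; simp only [← Finset.sum_mul, hμ.2, one_mul]
  have hcardΩ : (0 : ℝ) < (Fintype.card Ω : ℝ) := by
    exact_mod_cast Fintype.card_pos
  have hcardV : (0 : ℝ) < (Fintype.card V : ℝ) := by
    exact_mod_cast Fintype.card_pos
  set T := ∑ v : V, tvDist (marg μ v) (marg ν v) with hT
  have hlb : ∀ D ∈ S, T / (Fintype.card Ω : ℝ) ≤ D := by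
    rintro D ⟨γ, hγ, rfl⟩
    rw [div_le_iff₀ hcardΩ, mul_comm]
    exact sum_tv_le hγ
  have hinf : T / (Fintype.card Ω : ℝ) ≤ sInf S := le_csInf hSne hlb
  have hT0 : 0 ≤ T := Finset.sum_nonneg fun v _ => by
    unfold tvDist
    positivity
  have hS0 : 0 ≤ sInf S := le_trans (by positivity) hinf
  have hTle : T ≤ (Fintype.card Ω : ℝ) * sInf S := by
    rw [div_le_iff₀ hcardΩ] at hinf
    linarith [hinf]
  have : 2 * (Fintype.card Ω : ℝ) * (Fintype.card V : ℝ) * cutm μ ν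
      = 2 * (Fintype.card Ω : ℝ) * sInf S := by
    unfold cutm
    field_simp
    ring
  rw [this]
  nlinarith [hTle, hS0, hcardΩ]
end

section
/- If μ, ν ∈ P(Ω^V) (Ω, V finite) are both ε-extremal, i.e. each is within cut distance ε of the product of its own marginals, then n·cutm(μ, ν) ≤ 2εn + ∑_{v∈V} dTV(μ_v, ν_v), where n = |V|. -/
open scoped BigOperators

variable {Ω V : Type*}

/-- The product of the marginals of `μ`. -/
def prodMarg [Fintype Ω] [Fintype V] [DecidableEq V] [DecidableEq Ω]
    (μ : (V → Ω) → ℝ) : (V → Ω) → ℝ :=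
  fun σ => ∏ v : V, marg μ v (σ v)

section Aux

variable [Fintype Ω] [Fintype V] [DecidableEq V] [DecidableEq Ω]

noncomputable def gfun (I : Finset V) (ω : Ω) (σ : V → Ω) : ℝ :=
  ∑ i ∈ I, if σ i = ω then (1 : ℝ) else 0

noncomputable def sdisc (γ : ((V → Ω) × (V → Ω)) → ℝ) (g : (V → Ω) → ℝ) : ℝ :=
  ∑ p : (V → Ω) × (V → Ω), γ p * max (g p.1 - g p.2) 0

lemma cutDisc_abs (γ : ((V → Ω) × (V → Ω)) → ℝ) (I : Finset V)
    (B : Finset ((V → Ω) × (V → Ω))) (ω : Ω) :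
    cutDisc γ I B ω = |∑ p ∈ B, γ p * (gfun I ω p.1 - gfun I ω p.2)| := by
  unfold cutDisc gfun
  rw [Finset.sum_comm]
  congr 1
  refine Finset.sum_congr rfl fun p _ => ?_
  rw [← Finset.sum_sub_distrib, Finset.mul_sum]

lemma sdisc_nonneg {γ : ((V → Ω) × (V → Ω)) → ℝ} (hγ : ∀ p, 0 ≤ γ p) (g : (V → Ω) → ℝ) :
    0 ≤ sdisc γ g :=
  Finset.sum_nonneg fun p _ => mul_nonneg (hγ p) (le_max_right _ _)

lemma sum_le_sdisc {γ : ((V → Ω) × (V → Ω)) → ℝ} (hγ : ∀ p, 0 ≤ γ p) (g : (V → Ω) → ℝ)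
    (B : Finset ((V → Ω) × (V → Ω))) :
    ∑ p ∈ B, γ p * (g p.1 - g p.2) ≤ sdisc γ g :=
  calc ∑ p ∈ B, γ p * (g p.1 - g p.2) ≤ ∑ p ∈ B, γ p * max (g p.1 - g p.2) 0 :=
        Finset.sum_le_sum fun p _ => mul_le_mul_of_nonneg_left (le_max_left _ _) (hγ p)
    _ ≤ sdisc γ g := Finset.sum_le_sum_of_subset_of_nonneg (Finset.subset_univ _)
        (fun p _ _ => mul_nonneg (hγ p) (le_max_right _ _))

lemma cutDisc_le_max {γ : ((V → Ω) × (V → Ω)) → ℝ} (hγ : ∀ p, 0 ≤ γ p) (I : Finset V)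
    (B : Finset ((V → Ω) × (V → Ω))) (ω : Ω) :
    cutDisc γ I B ω ≤ max (sdisc γ (gfun I ω)) (sdisc γ (fun σ => -(gfun I ω σ))) := by
  rw [cutDisc_abs, abs_le]
  constructor
  · have h : -(∑ p ∈ B, γ p * (gfun I ω p.1 - gfun I ω p.2))
        ≤ sdisc γ (fun σ => -(gfun I ω σ)) := by
      have he : -(∑ p ∈ B, γ p * (gfun I ω p.1 - gfun I ω p.2))
          = ∑ p ∈ B, γ p * ((fun σ => -(gfun I ω σ)) p.1 - (fun σ => -(gfun I ω σ)) p.2) := by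
        rw [← Finset.sum_neg_distrib]
        exact Finset.sum_congr rfl fun p _ => by ring
      rw [he]
      exact sum_le_sdisc hγ (fun σ => -(gfun I ω σ)) B
    have := neg_le_neg h
    calc -(max (sdisc γ (gfun I ω)) (sdisc γ (fun σ => -(gfun I ω σ))))
        ≤ -(sdisc γ (fun σ => -(gfun I ω σ))) := neg_le_neg (le_max_right _ _)
      _ ≤ ∑ p ∈ B, γ p * (gfun I ω p.1 - gfun I ω p.2) := by linarith
  · exact le_trans (sum_le_sdisc hγ _ B) (le_max_left _ _)

lemma sdisc_le_sup {γ : ((V → Ω) × (V → Ω)) → ℝ} (hγ : ∀ p, 0 ≤ γ p) (I : Finset V) (ω : Ω) :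
    sdisc γ (gfun I ω)
      ≤ ⨆ x : Finset V × Finset ((V → Ω) × (V → Ω)) × Ω, cutDisc γ x.1 x.2.1 x.2.2 := by
  classical
  set B := Finset.univ.filter (fun p : (V → Ω) × (V → Ω) => gfun I ω p.2 < gfun I ω p.1) with hB
  have h1 : sdisc γ (gfun I ω) = ∑ p ∈ B, γ p * (gfun I ω p.1 - gfun I ω p.2) := by
    rw [hB, Finset.sum_filter, sdisc]
    refine Finset.sum_congr rfl fun p _ => ?_
    by_cases h : gfun I ω p.2 < gfun I ω p.1
    · rw [if_pos h, max_eq_left (le_of_lt (sub_pos.mpr h))]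
    · rw [if_neg h, max_eq_right (sub_nonpos.mpr (le_of_not_gt h)), mul_zero]
  have h2 : sdisc γ (gfun I ω) = cutDisc γ I B ω := by
    rw [cutDisc_abs, ← h1, abs_of_nonneg (sdisc_nonneg hγ _)]
  rw [h2]
  exact le_ciSup (f := fun x : Finset V × Finset ((V → Ω) × (V → Ω)) × Ω =>
    cutDisc γ x.1 x.2.1 x.2.2) (Set.Finite.bddAbove (Set.finite_range _)) ⟨I, B, ω⟩

lemma sdisc_neg_le_sup {γ : ((V → Ω) × (V → Ω)) → ℝ} (hγ : ∀ p, 0 ≤ γ p) (I : Finset V) (ω : Ω) :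
    sdisc γ (fun σ => -(gfun I ω σ))
      ≤ ⨆ x : Finset V × Finset ((V → Ω) × (V → Ω)) × Ω, cutDisc γ x.1 x.2.1 x.2.2 := by
  classical
  set B := Finset.univ.filter (fun p : (V → Ω) × (V → Ω) => gfun I ω p.1 < gfun I ω p.2) with hB
  have h1 : sdisc γ (fun σ => -(gfun I ω σ))
      = -(∑ p ∈ B, γ p * (gfun I ω p.1 - gfun I ω p.2)) := by
    rw [hB, Finset.sum_filter, ← Finset.sum_neg_distrib, sdisc]
    refine Finset.sum_congr rfl fun p _ => ?_
    by_cases h : gfun I ω p.1 < gfun I ω p.2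
    · rw [if_pos h]
      have he : -(gfun I ω p.1) - -(gfun I ω p.2) = -(gfun I ω p.1 - gfun I ω p.2) := by ring
      show γ p * max (-(gfun I ω p.1) - -(gfun I ω p.2)) 0 = -(γ p * (gfun I ω p.1 - gfun I ω p.2))
      rw [he, max_eq_left (by linarith), mul_neg]
    · rw [if_neg h, neg_zero]
      have hle : gfun I ω p.2 ≤ gfun I ω p.1 := le_of_not_gt h
      show γ p * max (-(gfun I ω p.1) - -(gfun I ω p.2)) 0 = 0
      rw [max_eq_right (by linarith), mul_zero]
  have h2 : sdisc γ (fun σ => -(gfun I ω σ)) = cutDisc γ I B ω := by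
    rw [cutDisc_abs, abs_of_nonpos, ← h1]
    have := sdisc_nonneg hγ (fun σ => -(gfun I ω σ))
    linarith [h1]
  rw [h2]
  exact le_ciSup (f := fun x : Finset V × Finset ((V → Ω) × (V → Ω)) × Ω =>
    cutDisc γ x.1 x.2.1 x.2.2) (Set.Finite.bddAbove (Set.finite_range _)) ⟨I, B, ω⟩

end Aux
set_option linter.unusedSectionVars false

section Glue

variable [Fintype Ω] [Fintype V] [DecidableEq V] [DecidableEq Ω]
variable {μ ν α γ1 γ2 : _}

noncomputable def glue (γ1 γ2 : ((V → Ω) × (V → Ω)) → ℝ) (α : (V → Ω) → ℝ) :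
    ((V → Ω) × (V → Ω)) → ℝ :=
  fun p => ∑ ρ : V → Ω, if α ρ = 0 then 0 else γ1 (p.1, ρ) * γ2 (ρ, p.2) / α ρ

lemma coupling_left_zero {μ α : (V → Ω) → ℝ} {γ1 : ((V → Ω) × (V → Ω)) → ℝ}
    (h : IsCoupling μ α γ1) {ρ : V → Ω} (hρ : α ρ = 0) (σ : V → Ω) : γ1 (σ, ρ) = 0 := by
  have h2 := h.2.2 ρ
  rw [hρ] at h2
  exact (Finset.sum_eq_zero_iff_of_nonneg (fun σ' _ => h.1 _)).mp h2 σ (Finset.mem_univ σ)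

lemma coupling_right_zero {α ν : (V → Ω) → ℝ} {γ2 : ((V → Ω) × (V → Ω)) → ℝ}
    (h : IsCoupling α ν γ2) {ρ : V → Ω} (hρ : α ρ = 0) (τ : V → Ω) : γ2 (ρ, τ) = 0 := by
  have h2 := h.2.1 ρ
  rw [hρ] at h2
  exact (Finset.sum_eq_zero_iff_of_nonneg (fun τ' _ => h.1 _)).mp h2 τ (Finset.mem_univ τ)

lemma glue_sum_tau {μ ν α : (V → Ω) → ℝ} {γ1 γ2 : ((V → Ω) × (V → Ω)) → ℝ}
    (hc1 : IsCoupling μ α γ1) (hc2 : IsCoupling α ν γ2) (σ ρ : V → Ω) :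
    ∑ τ : V → Ω, (if α ρ = 0 then 0 else γ1 (σ, ρ) * γ2 (ρ, τ) / α ρ) = γ1 (σ, ρ) := by
  by_cases h : α ρ = 0
  · simp [h, coupling_left_zero hc1 h σ]
  · simp only [if_neg h]
    rw [← Finset.sum_div, ← Finset.mul_sum, hc2.2.1 ρ, mul_div_assoc, div_self h, mul_one]

lemma glue_sum_sigma {μ ν α : (V → Ω) → ℝ} {γ1 γ2 : ((V → Ω) × (V → Ω)) → ℝ}
    (hc1 : IsCoupling μ α γ1) (hc2 : IsCoupling α ν γ2) (ρ τ : V → Ω) :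
    ∑ σ : V → Ω, (if α ρ = 0 then 0 else γ1 (σ, ρ) * γ2 (ρ, τ) / α ρ) = γ2 (ρ, τ) := by
  by_cases h : α ρ = 0
  · simp [h, coupling_right_zero hc2 h τ]
  · simp only [if_neg h]
    rw [← Finset.sum_div, ← Finset.sum_mul, hc1.2.2 ρ, mul_comm, mul_div_assoc, div_self h,
      mul_one]

lemma alpha_nonneg {α ν : (V → Ω) → ℝ} {γ2 : ((V → Ω) × (V → Ω)) → ℝ}
    (hc2 : IsCoupling α ν γ2) (ρ : V → Ω) : 0 ≤ α ρ := by
  rw [← hc2.2.1 ρ]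
  exact Finset.sum_nonneg fun τ _ => hc2.1 _

lemma glue_isCoupling {μ ν α : (V → Ω) → ℝ} {γ1 γ2 : ((V → Ω) × (V → Ω)) → ℝ}
    (hc1 : IsCoupling μ α γ1) (hc2 : IsCoupling α ν γ2) :
    IsCoupling μ ν (glue γ1 γ2 α) := by
  refine ⟨fun p => Finset.sum_nonneg fun ρ _ => ?_, fun σ => ?_, fun τ => ?_⟩
  · by_cases h : α ρ = 0
    · simp [h]
    · simp only [if_neg h]
      exact div_nonneg (mul_nonneg (hc1.1 _) (hc2.1 _)) (alpha_nonneg hc2 ρ)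
  · show ∑ τ : V → Ω, ∑ ρ : V → Ω, (if α ρ = 0 then 0 else γ1 (σ, ρ) * γ2 (ρ, τ) / α ρ) = μ σ
    rw [Finset.sum_comm]
    rw [Finset.sum_congr rfl fun ρ _ => glue_sum_tau hc1 hc2 σ ρ]
    exact hc1.2.1 σ
  · show ∑ σ : V → Ω, ∑ ρ : V → Ω, (if α ρ = 0 then 0 else γ1 (σ, ρ) * γ2 (ρ, τ) / α ρ) = ν τ
    rw [Finset.sum_comm]
    rw [Finset.sum_congr rfl fun ρ _ => glue_sum_sigma hc1 hc2 ρ τ]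
    exact hc2.2.2 τ

lemma sdisc_glue {μ ν α : (V → Ω) → ℝ} {γ1 γ2 : ((V → Ω) × (V → Ω)) → ℝ}
    (hc1 : IsCoupling μ α γ1) (hc2 : IsCoupling α ν γ2) (g : (V → Ω) → ℝ) :
    sdisc (glue γ1 γ2 α) g ≤ sdisc γ1 g + sdisc γ2 g := by
  classical
  set c : (V → Ω) → (V → Ω) → (V → Ω) → ℝ :=
    fun σ ρ τ => if α ρ = 0 then 0 else γ1 (σ, ρ) * γ2 (ρ, τ) / α ρ with hcdef
  have hcnn : ∀ σ ρ τ, 0 ≤ c σ ρ τ := by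
    intro σ ρ τ
    by_cases h : α ρ = 0
    · simp [hcdef, h]
    · simp only [hcdef, if_neg h]
      exact div_nonneg (mul_nonneg (hc1.1 _) (hc2.1 _)) (alpha_nonneg hc2 ρ)
  have step1 : sdisc (glue γ1 γ2 α) g
      = ∑ σ : V → Ω, ∑ τ : V → Ω, ∑ ρ : V → Ω, c σ ρ τ * max (g σ - g τ) 0 := by
    rw [sdisc, Fintype.sum_prod_type]
    refine Finset.sum_congr rfl fun σ _ => Finset.sum_congr rfl fun τ _ => ?_
    exact Finset.sum_mul _ _ _
  have hMle : ∀ σ ρ τ : V → Ω,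
      max (g σ - g τ) 0 ≤ max (g σ - g ρ) 0 + max (g ρ - g τ) 0 := by
    intro σ ρ τ
    refine max_le ?_ (by positivity)
    have h1 := le_max_left (g σ - g ρ) 0
    have h2 := le_max_left (g ρ - g τ) 0
    linarith
  have partA : ∑ σ : V → Ω, ∑ τ : V → Ω, ∑ ρ : V → Ω, c σ ρ τ * max (g σ - g ρ) 0
      = sdisc γ1 g := by
    rw [sdisc, Fintype.sum_prod_type]
    refine Finset.sum_congr rfl fun σ _ => ?_
    rw [Finset.sum_comm]
    refine Finset.sum_congr rfl fun ρ _ => ?_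
    rw [← Finset.sum_mul, glue_sum_tau hc1 hc2 σ ρ]
  have partB : ∑ σ : V → Ω, ∑ τ : V → Ω, ∑ ρ : V → Ω, c σ ρ τ * max (g ρ - g τ) 0
      = sdisc γ2 g := by
    have h1 : ∀ τ : V → Ω, ∑ σ : V → Ω, ∑ ρ : V → Ω, c σ ρ τ * max (g ρ - g τ) 0
        = ∑ ρ : V → Ω, γ2 (ρ, τ) * max (g ρ - g τ) 0 := by
      intro τ
      rw [Finset.sum_comm]
      refine Finset.sum_congr rfl fun ρ _ => ?_
      rw [← Finset.sum_mul, glue_sum_sigma hc1 hc2 ρ τ]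
    calc ∑ σ : V → Ω, ∑ τ : V → Ω, ∑ ρ : V → Ω, c σ ρ τ * max (g ρ - g τ) 0
        = ∑ τ : V → Ω, ∑ σ : V → Ω, ∑ ρ : V → Ω, c σ ρ τ * max (g ρ - g τ) 0 :=
          Finset.sum_comm
      _ = ∑ τ : V → Ω, ∑ ρ : V → Ω, γ2 (ρ, τ) * max (g ρ - g τ) 0 :=
          Finset.sum_congr rfl fun τ _ => h1 τ
      _ = ∑ ρ : V → Ω, ∑ τ : V → Ω, γ2 (ρ, τ) * max (g ρ - g τ) 0 := Finset.sum_comm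
      _ = sdisc γ2 g := by rw [sdisc, Fintype.sum_prod_type]
  calc sdisc (glue γ1 γ2 α) g
      = ∑ σ : V → Ω, ∑ τ : V → Ω, ∑ ρ : V → Ω, c σ ρ τ * max (g σ - g τ) 0 := step1
    _ ≤ ∑ σ : V → Ω, ∑ τ : V → Ω, ∑ ρ : V → Ω,
          c σ ρ τ * (max (g σ - g ρ) 0 + max (g ρ - g τ) 0) := by
        refine Finset.sum_le_sum fun σ _ => Finset.sum_le_sum fun τ _ =>
          Finset.sum_le_sum fun ρ _ => ?_
        exact mul_le_mul_of_nonneg_left (hMle σ ρ τ) (hcnn σ ρ τ)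
    _ = (∑ σ : V → Ω, ∑ τ : V → Ω, ∑ ρ : V → Ω, c σ ρ τ * max (g σ - g ρ) 0)
        + ∑ σ : V → Ω, ∑ τ : V → Ω, ∑ ρ : V → Ω, c σ ρ τ * max (g ρ - g τ) 0 := by
        simp [mul_add, Finset.sum_add_distrib]
    _ = sdisc γ1 g + sdisc γ2 g := by rw [partA, partB]

noncomputable def swapC (γ : ((V → Ω) × (V → Ω)) → ℝ) : ((V → Ω) × (V → Ω)) → ℝ :=
  fun p => γ (p.2, p.1)

lemma swap_isCoupling {μ ν : (V → Ω) → ℝ} {γ : ((V → Ω) × (V → Ω)) → ℝ}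
    (h : IsCoupling μ ν γ) : IsCoupling ν μ (swapC γ) :=
  ⟨fun p => h.1 _, fun σ => h.2.2 σ, fun τ => h.2.1 τ⟩

lemma sdisc_swap (γ : ((V → Ω) × (V → Ω)) → ℝ) (g : (V → Ω) → ℝ) :
    sdisc (swapC γ) g = sdisc γ (fun σ => -(g σ)) := by
  rw [sdisc, sdisc]
  refine Fintype.sum_equiv (Equiv.prodComm _ _) _ _ fun x => ?_
  show γ (x.2, x.1) * max (g x.1 - g x.2) 0 = γ (x.2, x.1) * max (-(g x.2) - -(g x.1)) 0
  rw [neg_sub_neg]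

end Glue
section TV

variable [Fintype Ω] [DecidableEq Ω]

noncomputable def tvCouple (p q : Ω → ℝ) : Ω × Ω → ℝ :=
  fun x =>
    (if x.1 = x.2 then min (p x.1) (q x.1) else 0) +
      (if (∑ a : Ω, (p a - min (p a) (q a))) = 0 then 0
        else (p x.1 - min (p x.1) (q x.1)) * (q x.2 - min (p x.2) (q x.2)) /
          (∑ a : Ω, (p a - min (p a) (q a))))

variable {p q : Ω → ℝ}

lemma tvt_nonneg (hp : ∀ a, 0 ≤ p a) (hq : ∀ a, 0 ≤ q a) :
    0 ≤ ∑ a : Ω, (p a - min (p a) (q a)) :=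
  Finset.sum_nonneg fun a _ => sub_nonneg.mpr (min_le_left _ _)

lemma tvt_symm (hp1 : ∑ a : Ω, p a = 1) (hq1 : ∑ a : Ω, q a = 1) :
    ∑ a : Ω, (q a - min (p a) (q a)) = ∑ a : Ω, (p a - min (p a) (q a)) := by
  rw [Finset.sum_sub_distrib, Finset.sum_sub_distrib, hp1, hq1]

lemma tvDist_eq_t (hp1 : ∑ a : Ω, p a = 1) (hq1 : ∑ a : Ω, q a = 1) :
    tvDist p q = ∑ a : Ω, (p a - min (p a) (q a)) := by
  rw [tvDist]
  have h : ∀ a : Ω, |p a - q a| = (p a - min (p a) (q a)) + (q a - min (p a) (q a)) := by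
    intro a
    rcases le_total (p a) (q a) with h | h
    · rw [min_eq_left h, abs_of_nonpos (by linarith)]; ring
    · rw [min_eq_right h, abs_of_nonneg (by linarith)]; ring
  rw [Finset.sum_congr rfl fun a _ => h a, Finset.sum_add_distrib, tvt_symm hp1 hq1]
  ring

lemma eq_of_t_zero (hp : ∀ a, 0 ≤ p a) (hq : ∀ a, 0 ≤ q a)
    (hp1 : ∑ a : Ω, p a = 1) (hq1 : ∑ a : Ω, q a = 1)
    (ht : ∑ a : Ω, (p a - min (p a) (q a)) = 0) (a : Ω) :
    p a = min (p a) (q a) ∧ q a = min (p a) (q a) := by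
  have h1 : ∀ b ∈ Finset.univ, p b - min (p b) (q b) = 0 :=
    (Finset.sum_eq_zero_iff_of_nonneg fun b _ => sub_nonneg.mpr (min_le_left _ _)).mp ht
  have ht2 : ∑ a : Ω, (q a - min (p a) (q a)) = 0 := by rw [tvt_symm hp1 hq1, ht]
  have h2 : ∀ b ∈ Finset.univ, q b - min (p b) (q b) = 0 :=
    (Finset.sum_eq_zero_iff_of_nonneg fun b _ => sub_nonneg.mpr (min_le_right _ _)).mp ht2
  constructor
  · have := h1 a (Finset.mem_univ a); linarith
  · have := h2 a (Finset.mem_univ a); linarith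

lemma tvCouple_nonneg (hp : ∀ a, 0 ≤ p a) (hq : ∀ a, 0 ≤ q a) (x : Ω × Ω) :
    0 ≤ tvCouple p q x := by
  refine add_nonneg ?_ ?_
  · split
    · exact le_min (hp _) (hq _)
    · exact le_refl 0
  · split
    · exact le_refl 0
    · exact div_nonneg (mul_nonneg (sub_nonneg.mpr (min_le_left _ _))
        (sub_nonneg.mpr (min_le_right _ _))) (tvt_nonneg hp hq)

lemma tvCouple_sum_right (hp : ∀ a, 0 ≤ p a) (hq : ∀ a, 0 ≤ q a)
    (hp1 : ∑ a : Ω, p a = 1) (hq1 : ∑ a : Ω, q a = 1) (a : Ω) :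
    ∑ b : Ω, tvCouple p q (a, b) = p a := by
  simp only [tvCouple]
  rw [Finset.sum_add_distrib]
  have h1 : ∑ b : Ω, (if a = b then min (p a) (q a) else 0) = min (p a) (q a) := by simp
  rw [h1]
  by_cases ht : (∑ a : Ω, (p a - min (p a) (q a))) = 0
  · simp only [if_pos ht]
    have := (eq_of_t_zero hp hq hp1 hq1 ht a).1
    simp only [Finset.sum_const_zero, add_zero]
    linarith
  · simp only [if_neg ht]
    rw [← Finset.sum_div, ← Finset.mul_sum, tvt_symm hp1 hq1, mul_div_assoc,
      div_self ht, mul_one]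
    ring

lemma tvCouple_sum_left (hp : ∀ a, 0 ≤ p a) (hq : ∀ a, 0 ≤ q a)
    (hp1 : ∑ a : Ω, p a = 1) (hq1 : ∑ a : Ω, q a = 1) (b : Ω) :
    ∑ a : Ω, tvCouple p q (a, b) = q b := by
  simp only [tvCouple]
  rw [Finset.sum_add_distrib]
  have h1 : ∑ a : Ω, (if a = b then min (p a) (q a) else 0) = min (p b) (q b) := by simp
  rw [h1]
  by_cases ht : (∑ a : Ω, (p a - min (p a) (q a))) = 0
  · simp only [if_pos ht]
    have := (eq_of_t_zero hp hq hp1 hq1 ht b).2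
    simp only [Finset.sum_const_zero, add_zero]
    linarith
  · simp only [if_neg ht]
    rw [← Finset.sum_div, ← Finset.sum_mul, mul_comm, mul_div_assoc, div_self ht, mul_one]
    ring

lemma tvCouple_total (hp : ∀ a, 0 ≤ p a) (hq : ∀ a, 0 ≤ q a)
    (hp1 : ∑ a : Ω, p a = 1) (hq1 : ∑ a : Ω, q a = 1) :
    ∑ x : Ω × Ω, tvCouple p q x = 1 := by
  rw [Fintype.sum_prod_type]
  rw [Finset.sum_congr rfl fun a _ => tvCouple_sum_right hp hq hp1 hq1 a]
  exact hp1

lemma tvCouple_offdiag (hp : ∀ a, 0 ≤ p a) (hq : ∀ a, 0 ≤ q a)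
    (hp1 : ∑ a : Ω, p a = 1) (hq1 : ∑ a : Ω, q a = 1) :
    ∑ x : Ω × Ω, tvCouple p q x * (if x.1 = x.2 then 0 else 1) ≤ tvDist p q := by
  rw [tvDist_eq_t hp1 hq1]
  set t := ∑ a : Ω, (p a - min (p a) (q a)) with hT
  have hb : ∀ x : Ω × Ω, tvCouple p q x * (if x.1 = x.2 then 0 else 1)
      ≤ (if t = 0 then 0 else
          (p x.1 - min (p x.1) (q x.1)) * (q x.2 - min (p x.2) (q x.2)) / t) := by
    intro x
    have hsec : 0 ≤ (if t = 0 then 0 else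
        (p x.1 - min (p x.1) (q x.1)) * (q x.2 - min (p x.2) (q x.2)) / t) := by
      split
      · exact le_refl 0
      · exact div_nonneg (mul_nonneg (sub_nonneg.mpr (min_le_left _ _))
          (sub_nonneg.mpr (min_le_right _ _))) (tvt_nonneg hp hq)
    by_cases hx : x.1 = x.2
    · rw [if_pos hx, mul_zero]; exact hsec
    · rw [if_neg hx, mul_one, tvCouple, if_neg hx, zero_add]
  calc ∑ x : Ω × Ω, tvCouple p q x * (if x.1 = x.2 then 0 else 1)
      ≤ ∑ x : Ω × Ω, (if t = 0 then 0 else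
          (p x.1 - min (p x.1) (q x.1)) * (q x.2 - min (p x.2) (q x.2)) / t) :=
        Finset.sum_le_sum fun x _ => hb x
    _ ≤ t := by
        by_cases ht : t = 0
        · simp only [if_pos ht]
          simp [ht, tvt_nonneg hp hq]
        · simp only [if_neg ht]
          rw [Fintype.sum_prod_type]
          have h1 : ∀ a : Ω, ∑ b : Ω, (p a - min (p a) (q a)) * (q b - min (p b) (q b)) / t
              = p a - min (p a) (q a) := by
            intro a
            rw [← Finset.sum_div, ← Finset.mul_sum, tvt_symm hp1 hq1, ← hT, mul_div_assoc,
              div_self ht, mul_one]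
          rw [Finset.sum_congr rfl fun a _ => h1 a]

end TV
section ProdC

variable [Fintype Ω] [Fintype V] [DecidableEq V] [DecidableEq Ω]
variable {μ ν : (V → Ω) → ℝ}

lemma marg_nonneg (hμ : IsPMF μ) (v : V) (ω : Ω) : 0 ≤ marg μ v ω :=
  Finset.sum_nonneg fun σ _ => by split
                                  · exact hμ.1 σ
                                  · exact le_refl 0

lemma marg_sum (hμ : IsPMF μ) (v : V) : ∑ ω : Ω, marg μ v ω = 1 := by
  unfold marg
  rw [Finset.sum_comm]
  have h : ∀ σ : V → Ω, ∑ ω : Ω, (if σ v = ω then μ σ else 0) = μ σ := fun σ => by simp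
  rw [Finset.sum_congr rfl fun σ _ => h σ]
  exact hμ.2

lemma prodMarg_isPMF (hμ : IsPMF μ) : IsPMF (prodMarg μ) := by
  constructor
  · exact fun σ => Finset.prod_nonneg fun v _ => marg_nonneg hμ v (σ v)
  · show ∑ σ : V → Ω, ∏ v : V, marg μ v (σ v) = 1
    rw [← Fintype.prod_sum]
    rw [Finset.prod_congr rfl fun v _ => marg_sum hμ v]
    exact Finset.prod_const_one

noncomputable def indepCouple (μ ν : (V → Ω) → ℝ) : ((V → Ω) × (V → Ω)) → ℝ :=
  fun p => μ p.1 * ν p.2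

lemma indep_isCoupling (hμ : IsPMF μ) (hν : IsPMF ν) : IsCoupling μ ν (indepCouple μ ν) := by
  refine ⟨fun p => mul_nonneg (hμ.1 _) (hν.1 _), fun σ => ?_, fun τ => ?_⟩
  · show ∑ τ : V → Ω, μ σ * ν τ = μ σ
    rw [← Finset.mul_sum, hν.2, mul_one]
  · show ∑ σ : V → Ω, μ σ * ν τ = ν τ
    rw [← Finset.sum_mul, hμ.2, one_mul]

noncomputable def prodCouple (μ ν : (V → Ω) → ℝ) : ((V → Ω) × (V → Ω)) → ℝ :=
  fun x => ∏ v : V, tvCouple (marg μ v) (marg ν v) (x.1 v, x.2 v)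

lemma prodCouple_isCoupling (hμ : IsPMF μ) (hν : IsPMF ν) :
    IsCoupling (prodMarg μ) (prodMarg ν) (prodCouple μ ν) := by
  refine ⟨fun p => Finset.prod_nonneg fun v _ =>
      tvCouple_nonneg (marg_nonneg hμ v) (marg_nonneg hν v) _, fun σ => ?_, fun τ => ?_⟩
  · show ∑ τ : V → Ω, ∏ v : V, tvCouple (marg μ v) (marg ν v) (σ v, τ v)
        = ∏ v : V, marg μ v (σ v)
    calc ∑ τ : V → Ω, ∏ v : V, tvCouple (marg μ v) (marg ν v) (σ v, τ v)
        = ∏ v : V, ∑ b : Ω, tvCouple (marg μ v) (marg ν v) (σ v, b) :=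
          (Fintype.prod_sum fun v b => tvCouple (marg μ v) (marg ν v) (σ v, b)).symm
      _ = ∏ v : V, marg μ v (σ v) := Finset.prod_congr rfl fun v _ =>
          tvCouple_sum_right (marg_nonneg hμ v) (marg_nonneg hν v) (marg_sum hμ v)
            (marg_sum hν v) (σ v)
  · show ∑ σ : V → Ω, ∏ v : V, tvCouple (marg μ v) (marg ν v) (σ v, τ v)
        = ∏ v : V, marg ν v (τ v)
    calc ∑ σ : V → Ω, ∏ v : V, tvCouple (marg μ v) (marg ν v) (σ v, τ v)
        = ∏ v : V, ∑ a : Ω, tvCouple (marg μ v) (marg ν v) (a, τ v) :=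
          (Fintype.prod_sum fun v a => tvCouple (marg μ v) (marg ν v) (a, τ v)).symm
      _ = ∏ v : V, marg ν v (τ v) := Finset.prod_congr rfl fun v _ =>
          tvCouple_sum_left (marg_nonneg hμ v) (marg_nonneg hν v) (marg_sum hμ v)
            (marg_sum hν v) (τ v)

lemma tvCouple_marg_total (hμ : IsPMF μ) (hν : IsPMF ν) (v : V) :
    ∑ x : Ω × Ω, tvCouple (marg μ v) (marg ν v) x = 1 :=
  tvCouple_total (marg_nonneg hμ v) (marg_nonneg hν v) (marg_sum hμ v) (marg_sum hν v)

lemma prodCouple_coord (hμ : IsPMF μ) (hν : IsPMF ν) (v : V) :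
    ∑ x : (V → Ω) × (V → Ω), prodCouple μ ν x * (if x.1 v = x.2 v then 0 else 1)
      ≤ tvDist (marg μ v) (marg ν v) := by
  classical
  set c : V → Ω × Ω → ℝ := fun u y => tvCouple (marg μ u) (marg ν u) y with hc
  set e : Ω × Ω → ℝ := fun y => if y.1 = y.2 then 0 else 1 with he
  have key : ∑ x : (V → Ω) × (V → Ω), prodCouple μ ν x * (if x.1 v = x.2 v then 0 else 1)
      = ∑ y : Ω × Ω, c v y * e y := by
    have h1 : ∑ x : (V → Ω) × (V → Ω), prodCouple μ ν x * (if x.1 v = x.2 v then 0 else 1)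
        = ∑ ρ : V → Ω × Ω, ∏ u : V, (c u (ρ u) * (if u = v then e (ρ u) else 1)) := by
      refine (Fintype.sum_equiv (Equiv.arrowProdEquivProdArrow V (fun _ => Ω) (fun _ => Ω)) _ _ fun ρ => ?_).symm
      show ∏ u : V, (c u (ρ u) * (if u = v then e (ρ u) else 1))
          = prodCouple μ ν (fun u => (ρ u).1, fun u => (ρ u).2) * (if (ρ v).1 = (ρ v).2 then 0 else 1)
      rw [Finset.prod_mul_distrib, Finset.prod_ite_eq' Finset.univ v (fun u => e (ρ u))]
      simp only [Finset.mem_univ, if_true]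
      rfl
    rw [h1,
      show (∑ ρ : V → Ω × Ω, ∏ u : V, (c u (ρ u) * (if u = v then e (ρ u) else 1)))
          = ∏ u : V, ∑ y : Ω × Ω, (c u y * (if u = v then e y else 1)) from
        (Fintype.prod_sum fun u y => c u y * (if u = v then e y else 1)).symm]
    have h2 : ∀ u : V, ∑ y : Ω × Ω, (c u y * (if u = v then e y else 1))
        = if u = v then ∑ y : Ω × Ω, c u y * e y else 1 := by
      intro u
      by_cases huv : u = v
      · simp only [if_pos huv]
      · simp only [if_neg huv, mul_one]
        exact tvCouple_marg_total hμ hν u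
    rw [Finset.prod_congr rfl fun u _ => h2 u,
      Finset.prod_ite_eq' Finset.univ v (fun u => ∑ y : Ω × Ω, c u y * e y)]
    simp
  rw [key]
  exact tvCouple_offdiag (marg_nonneg hμ v) (marg_nonneg hν v) (marg_sum hμ v) (marg_sum hν v)

lemma sdisc_prodCouple (hμ : IsPMF μ) (hν : IsPMF ν) (g : (V → Ω) → ℝ)
    (hg : ∀ σ τ : V → Ω, max (g σ - g τ) 0 ≤ ∑ v : V, (if σ v = τ v then (0:ℝ) else 1)) :
    sdisc (prodCouple μ ν) g ≤ ∑ v : V, tvDist (marg μ v) (marg ν v) := by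
  have hnn : ∀ x, 0 ≤ prodCouple μ ν x := (prodCouple_isCoupling hμ hν).1
  calc sdisc (prodCouple μ ν) g
      ≤ ∑ x : (V → Ω) × (V → Ω), prodCouple μ ν x * ∑ v : V, (if x.1 v = x.2 v then (0:ℝ) else 1) :=
        Finset.sum_le_sum fun x _ => mul_le_mul_of_nonneg_left (hg x.1 x.2) (hnn x)
    _ = ∑ v : V, ∑ x : (V → Ω) × (V → Ω), prodCouple μ ν x * (if x.1 v = x.2 v then (0:ℝ) else 1) := by
        rw [Finset.sum_comm]
        exact Finset.sum_congr rfl fun x _ => Finset.mul_sum _ _ _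
    _ ≤ ∑ v : V, tvDist (marg μ v) (marg ν v) :=
        Finset.sum_le_sum fun v _ => prodCouple_coord hμ hν v

end ProdC
section Main

variable [Fintype Ω] [Fintype V] [DecidableEq V] [DecidableEq Ω]

lemma gfun_diff_le (I : Finset V) (ω : Ω) (σ τ : V → Ω) :
    max (gfun I ω σ - gfun I ω τ) 0 ≤ ∑ v : V, (if σ v = τ v then (0:ℝ) else 1) := by
  refine max_le ?_ (Finset.sum_nonneg fun v _ => by split <;> norm_num)
  rw [gfun, gfun, ← Finset.sum_sub_distrib]
  calc ∑ i ∈ I, ((if σ i = ω then (1:ℝ) else 0) - (if τ i = ω then (1:ℝ) else 0))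
      ≤ ∑ i ∈ I, (if σ i = τ i then (0:ℝ) else 1) := by
        refine Finset.sum_le_sum fun i _ => ?_
        by_cases h : σ i = τ i
        · simp [h]
        · split <;> split <;> simp_all <;> norm_num
    _ ≤ ∑ v : V, (if σ v = τ v then (0:ℝ) else 1) :=
        Finset.sum_le_sum_of_subset_of_nonneg (Finset.subset_univ _)
          (fun v _ _ => by split <;> norm_num)

lemma gfun_neg_diff_le (I : Finset V) (ω : Ω) (σ τ : V → Ω) :
    max ((fun ρ => -(gfun I ω ρ)) σ - (fun ρ => -(gfun I ω ρ)) τ) 0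
      ≤ ∑ v : V, (if σ v = τ v then (0:ℝ) else 1) := by
  have h := gfun_diff_le I ω τ σ
  have he : ∑ v : V, (if τ v = σ v then (0:ℝ) else 1) = ∑ v : V, (if σ v = τ v then (0:ℝ) else 1) :=
    Finset.sum_congr rfl fun v _ => by simp [eq_comm]
  calc max (-(gfun I ω σ) - -(gfun I ω τ)) 0 = max (gfun I ω τ - gfun I ω σ) 0 := by
        rw [neg_sub_neg]
    _ ≤ ∑ v : V, (if τ v = σ v then (0:ℝ) else 1) := h
    _ = _ := he

lemma cutDisc_empty (γ : ((V → Ω) × (V → Ω)) → ℝ) (B : Finset ((V → Ω) × (V → Ω))) (ω : Ω) :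
    cutDisc γ ∅ B ω = 0 := by
  rw [cutDisc]
  simp

theorem extremal_cutm_of_close_marginals' [Nonempty Ω] [Nonempty V]
    (μ ν : (V → Ω) → ℝ) (hμ : IsPMF μ) (hν : IsPMF ν) (ε : ℝ)
    (hμext : cutm μ (prodMarg μ) < ε) (hνext : cutm ν (prodMarg ν) < ε) :
    (Fintype.card V : ℝ) * cutm μ ν
      ≤ 2 * ε * (Fintype.card V : ℝ) + ∑ v : V, tvDist (marg μ v) (marg ν v) := by
  classical
  have hn : (0:ℝ) < (Fintype.card V : ℝ) := by
    exact_mod_cast Fintype.card_pos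
  set ω₀ : Ω := Classical.arbitrary Ω
  -- generic facts about the coupling sets
  have hmem : ∀ (μ' ν' : (V → Ω) → ℝ) (γ : ((V → Ω) × (V → Ω)) → ℝ), IsCoupling μ' ν' γ →
      (⨆ x : Finset V × Finset ((V → Ω) × (V → Ω)) × Ω, cutDisc γ x.1 x.2.1 x.2.2) ∈
        {D : ℝ | ∃ γ', IsCoupling μ' ν' γ' ∧
          D = ⨆ x : Finset V × Finset ((V → Ω) × (V → Ω)) × Ω, cutDisc γ' x.1 x.2.1 x.2.2} :=
    fun μ' ν' γ hγ => ⟨γ, hγ, rfl⟩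
  have hbdd : ∀ (μ' ν' : (V → Ω) → ℝ),
      BddBelow {D : ℝ | ∃ γ', IsCoupling μ' ν' γ' ∧
        D = ⨆ x : Finset V × Finset ((V → Ω) × (V → Ω)) × Ω, cutDisc γ' x.1 x.2.1 x.2.2} := by
    intro μ' ν'
    refine ⟨0, fun D hD => ?_⟩
    obtain ⟨γ', _, rfl⟩ := hD
    have h0 : (0:ℝ) = cutDisc γ' ∅ ∅ ω₀ := (cutDisc_empty γ' ∅ ω₀).symm
    rw [h0]
    exact le_ciSup (f := fun x : Finset V × Finset ((V → Ω) × (V → Ω)) × Ω =>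
      cutDisc γ' x.1 x.2.1 x.2.2) (Set.Finite.bddAbove (Set.finite_range _)) ⟨∅, ∅, ω₀⟩
  -- extract good couplings from extremality
  have hPμ := prodMarg_isPMF hμ
  have hPν := prodMarg_isPMF hν
  have hex : ∀ (μ' ν' : (V → Ω) → ℝ), IsPMF μ' → IsPMF ν' → cutm μ' ν' < ε →
      ∃ γ, IsCoupling μ' ν' γ ∧
        (⨆ x : Finset V × Finset ((V → Ω) × (V → Ω)) × Ω, cutDisc γ x.1 x.2.1 x.2.2)
          < ε * (Fintype.card V : ℝ) := by
    intro μ' ν' hμ' hν' hlt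
    rw [cutm] at hlt
    have hne : {D : ℝ | ∃ γ', IsCoupling μ' ν' γ' ∧
        D = ⨆ x : Finset V × Finset ((V → Ω) × (V → Ω)) × Ω,
          cutDisc γ' x.1 x.2.1 x.2.2}.Nonempty :=
      ⟨_, hmem μ' ν' _ (indep_isCoupling hμ' hν')⟩
    have hlt2 : sInf {D : ℝ | ∃ γ', IsCoupling μ' ν' γ' ∧
        D = ⨆ x : Finset V × Finset ((V → Ω) × (V → Ω)) × Ω,
          cutDisc γ' x.1 x.2.1 x.2.2} < ε * (Fintype.card V : ℝ) := by
      rw [inv_mul_lt_iff₀ hn] at hlt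
      linarith [hlt]
    obtain ⟨D, hD, hDlt⟩ := exists_lt_of_csInf_lt hne hlt2
    obtain ⟨γ, hγ, rfl⟩ := hD
    exact ⟨γ, hγ, hDlt⟩
  obtain ⟨γ1, hγ1, hD1⟩ := hex μ (prodMarg μ) hμ hPμ hμext
  obtain ⟨γ2, hγ2, hD2⟩ := hex ν (prodMarg ν) hν hPν hνext
  set γm := prodCouple μ ν with hγmdef
  have hγm : IsCoupling (prodMarg μ) (prodMarg ν) γm := prodCouple_isCoupling hμ hν
  set γ2s := swapC γ2 with hγ2sdef
  have hγ2s : IsCoupling (prodMarg ν) ν γ2s := swap_isCoupling hγ2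
  set γmid := glue γm γ2s (prodMarg ν) with hγmiddef
  have hγmid : IsCoupling (prodMarg μ) ν γmid := glue_isCoupling hγm hγ2s
  set γstar := glue γ1 γmid (prodMarg μ) with hγstardef
  have hγstar : IsCoupling μ ν γstar := glue_isCoupling hγ1 hγmid
  set T := ∑ v : V, tvDist (marg μ v) (marg ν v) with hT
  -- bound the sup discrepancy of γstar
  have hsupbound : (⨆ x : Finset V × Finset ((V → Ω) × (V → Ω)) × Ω,
      cutDisc γstar x.1 x.2.1 x.2.2) ≤ ε * (Fintype.card V : ℝ) + T + ε * (Fintype.card V : ℝ) := by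
    refine ciSup_le fun x => ?_
    obtain ⟨I, B, ω⟩ := x
    have hsd1 : sdisc γstar (gfun I ω) ≤ ε * (Fintype.card V : ℝ) + T + ε * (Fintype.card V : ℝ) := by
      have t1 : sdisc γ1 (gfun I ω) ≤ ε * (Fintype.card V : ℝ) :=
        le_trans (sdisc_le_sup hγ1.1 I ω) (le_of_lt hD1)
      have t2 : sdisc γm (gfun I ω) ≤ T :=
        sdisc_prodCouple hμ hν (gfun I ω) (gfun_diff_le I ω)
      have t3 : sdisc γ2s (gfun I ω) ≤ ε * (Fintype.card V : ℝ) := by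
        rw [hγ2sdef, sdisc_swap]
        exact le_trans (sdisc_neg_le_sup hγ2.1 I ω) (le_of_lt hD2)
      have hmid : sdisc γmid (gfun I ω) ≤ sdisc γm (gfun I ω) + sdisc γ2s (gfun I ω) :=
        sdisc_glue hγm hγ2s _
      have hst : sdisc γstar (gfun I ω) ≤ sdisc γ1 (gfun I ω) + sdisc γmid (gfun I ω) :=
        sdisc_glue hγ1 hγmid _
      linarith
    have hsd2 : sdisc γstar (fun σ => -(gfun I ω σ))
        ≤ ε * (Fintype.card V : ℝ) + T + ε * (Fintype.card V : ℝ) := by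
      have t1 : sdisc γ1 (fun σ => -(gfun I ω σ)) ≤ ε * (Fintype.card V : ℝ) :=
        le_trans (sdisc_neg_le_sup hγ1.1 I ω) (le_of_lt hD1)
      have t2 : sdisc γm (fun σ => -(gfun I ω σ)) ≤ T :=
        sdisc_prodCouple hμ hν _ (gfun_neg_diff_le I ω)
      have t3 : sdisc γ2s (fun σ => -(gfun I ω σ)) ≤ ε * (Fintype.card V : ℝ) := by
        rw [hγ2sdef, sdisc_swap]
        have he : (fun σ => -((fun ρ => -(gfun I ω ρ)) σ)) = gfun I ω := by
          funext σ; simp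
        rw [he]
        exact le_trans (sdisc_le_sup hγ2.1 I ω) (le_of_lt hD2)
      have hmid : sdisc γmid (fun σ => -(gfun I ω σ))
          ≤ sdisc γm (fun σ => -(gfun I ω σ)) + sdisc γ2s (fun σ => -(gfun I ω σ)) :=
        sdisc_glue hγm hγ2s _
      have hst : sdisc γstar (fun σ => -(gfun I ω σ))
          ≤ sdisc γ1 (fun σ => -(gfun I ω σ)) + sdisc γmid (fun σ => -(gfun I ω σ)) :=
        sdisc_glue hγ1 hγmid _
      linarith
    exact le_trans (cutDisc_le_max hγstar.1 I B ω) (max_le hsd1 hsd2)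
  -- conclude
  have hcut : (Fintype.card V : ℝ) * cutm μ ν
      = sInf {D : ℝ | ∃ γ', IsCoupling μ ν γ' ∧
          D = ⨆ x : Finset V × Finset ((V → Ω) × (V → Ω)) × Ω, cutDisc γ' x.1 x.2.1 x.2.2} := by
    rw [cutm, ← mul_assoc, mul_inv_cancel₀ (ne_of_gt hn), one_mul]
  rw [hcut]
  have hle : sInf {D : ℝ | ∃ γ', IsCoupling μ ν γ' ∧
      D = ⨆ x : Finset V × Finset ((V → Ω) × (V → Ω)) × Ω, cutDisc γ' x.1 x.2.1 x.2.2}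
        ≤ ⨆ x : Finset V × Finset ((V → Ω) × (V → Ω)) × Ω, cutDisc γstar x.1 x.2.1 x.2.2 :=
    csInf_le (hbdd μ ν) (hmem μ ν γstar hγstar)
  calc _ ≤ (⨆ x : Finset V × Finset ((V → Ω) × (V → Ω)) × Ω,
        cutDisc γstar x.1 x.2.1 x.2.2) := hle
    _ ≤ ε * (Fintype.card V : ℝ) + T + ε * (Fintype.card V : ℝ) := hsupbound
    _ = 2 * ε * (Fintype.card V : ℝ) + T := by ring

end Main

/-- if `μ` and `ν` are both ε-extremal (within cut distance ε of the product of
their own marginals), then `n·cutm(μ,ν) ≤ 2εn + ∑_v dTV(μ_v, ν_v)`. -/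
theorem extremal_cutm_of_close_marginals [Fintype Ω] [Fintype V] [DecidableEq V]
    [DecidableEq Ω] [Nonempty Ω] [Nonempty V]
    (μ ν : (V → Ω) → ℝ) (hμ : IsPMF μ) (hν : IsPMF ν) (ε : ℝ)
    (hμext : cutm μ (prodMarg μ) < ε) (hνext : cutm ν (prodMarg ν) < ε) :
    (Fintype.card V : ℝ) * cutm μ ν
      ≤ 2 * ε * (Fintype.card V : ℝ) + ∑ v : V, tvDist (marg μ v) (marg ν v) := by
  exact extremal_cutm_of_close_marginals' μ ν hμ hν ε hμext hνext
end
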